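/- Unbiasedness of the M-dimensional random Fourier feature map: let p be a probability distribution on ℝ^d with K(x, x') = E_{w∼p}[cos(wᵀ(x − x'))], and let (w_1, b_1), …, (w_M, b_M) be i.i.d. with w_i ∼ p and b_i ∼ U_{[0,2π]} independent. Define ψ(x) = √(2/M)·(cos(w_1ᵀx + b_1), …, cos(w_Mᵀx + b_M)) ∈ ℝ^M. Then for all x, x' ∈ ℝ^d, E[ψ(x)ᵀψ(x')] = K(x, x'). -/

import Mathlib

/-!
Each summand of `ψ(x)ᵀψ(x')` depends on a single sample `(wᵢ, bᵢ)`, so the expectation is `M`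
times that of `(2/M) cos(wᵀx + b) cos(wᵀx' + b)`. By the product-to-sum formula this is
`(1/M) (cos(wᵀ(x - x')) + cos(wᵀ(x + x') + 2b))`, and the uniform phase `b` averages the second
cosine out over its full periods, leaving `K(x, x') / M`.
-/

open MeasureTheory Real
open scoped BigOperators

/-- The uniform probability distribution on `[0, 2π]`. -/
noncomputable def uniform02pi : Measure ℝ :=
  (ENNReal.ofReal (2 * π))⁻¹ • volume.restrict (Set.Icc (0:ℝ) (2 * π))

/-- The M-dimensional random Fourier feature map built from i.i.d. samples
`(w_1,b_1),…,(w_M,b_M)`: `ψ(x)_i = √(2/M) cos(w_iᵀx + b_i)`. -/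
noncomputable def rffMap {d M : ℕ} (ω : Fin M → ((Fin d → ℝ) × ℝ)) (x : Fin d → ℝ) :
    Fin M → ℝ :=
  fun i => Real.sqrt (2 / M) * Real.cos ((∑ j, (ω i).1 j * x j) + (ω i).2)

instance : IsProbabilityMeasure uniform02pi where
  measure_univ := by
    rw [uniform02pi, Measure.smul_apply, Measure.restrict_apply_univ, Real.volume_Icc, sub_zero,
      smul_eq_mul, ENNReal.inv_mul_cancel (ENNReal.ofReal_pos.mpr two_pi_pos).ne'
        ENNReal.ofReal_ne_top]

lemma integral_uniform02pi (f : ℝ → ℝ) :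
    ∫ b, f b ∂uniform02pi = (2 * π)⁻¹ * ∫ b in 0..2 * π, f b := by
  rw [uniform02pi, integral_smul_measure, intervalIntegral.integral_of_le two_pi_pos.le,
    ← integral_Icc_eq_integral_Ioc, ENNReal.toReal_inv, ENNReal.toReal_ofReal two_pi_pos.le,
    smul_eq_mul]

lemma integral_cos_two_mul_add_eq_zero (c : ℝ) : ∫ b in 0..2 * π, cos (2 * b + c) = 0 := by
  rw [intervalIntegral.integral_comp_mul_add (fun b => cos b) two_ne_zero, integral_cos,
    show 2 * (2 * π) + c = c + (2 : ℕ) * (2 * π) by ring, sin_periodic.nat_mul 2]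
  simp

lemma integral_cos_add_mul_cos_add_uniform02pi (a a' : ℝ) :
    ∫ b, cos (a + b) * cos (a' + b) ∂uniform02pi = cos (a - a') / 2 := by
  have h (b : ℝ) : cos (a + b) * cos (a' + b) = (cos (a - a') + cos (2 * b + (a + a'))) / 2 := by
    rw [eq_div_iff two_ne_zero, mul_comm, ← mul_assoc, two_mul_cos_mul_cos]
    ring_nf
  simp_rw [h, integral_uniform02pi]
  rw [intervalIntegral.integral_div, intervalIntegral.integral_add intervalIntegrable_const
    ((by fun_prop : Continuous fun b => cos (2 * b + (a + a'))).intervalIntegrable _ _),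
    integral_cos_two_mul_add_eq_zero, intervalIntegral.integral_const, smul_eq_mul]
  field_simp
  ring

noncomputable def rffFeature {d : ℕ} (x : Fin d → ℝ) (wb : (Fin d → ℝ) × ℝ) : ℝ :=
  cos (∑ j, wb.1 j * x j + wb.2)

lemma rffMap_mul_rffMap {d M : ℕ} (ω : Fin M → (Fin d → ℝ) × ℝ) (x x' : Fin d → ℝ) (i : Fin M) :
    rffMap ω x i * rffMap ω x' i = 2 / M * (rffFeature x (ω i) * rffFeature x' (ω i)) := by
  rw [rffMap, rffMap, rffFeature, rffFeature, mul_mul_mul_comm,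
    mul_self_sqrt (by positivity)]

lemma integrable_rffFeature_mul {d : ℕ} (μ : Measure ((Fin d → ℝ) × ℝ)) [IsFiniteMeasure μ]
    (x x' : Fin d → ℝ) : Integrable (fun wb => rffFeature x wb * rffFeature x' wb) μ := by
  refine Integrable.of_bound (Continuous.aestronglyMeasurable ?_) 1 (ae_of_all _ fun wb => ?_)
  · unfold rffFeature
    fun_prop
  · rw [norm_mul]
    exact mul_le_one₀ (abs_cos_le_one _) (norm_nonneg _) (abs_cos_le_one _)

lemma integral_rffFeature_mul {d : ℕ} (p : Measure (Fin d → ℝ)) [IsFiniteMeasure p]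
    (x x' : Fin d → ℝ) :
    ∫ wb, rffFeature x wb * rffFeature x' wb ∂(p.prod uniform02pi)
      = (∫ w, cos (∑ j, w j * (x j - x' j)) ∂p) / 2 := by
  rw [integral_prod _ (integrable_rffFeature_mul _ x x'), ← integral_div]
  congr 1 with w
  simp only [rffFeature, integral_cos_add_mul_cos_add_uniform02pi, mul_sub, Finset.sum_sub_distrib]

lemma integral_sum_comp_eval_pi {ι α E : Type*} [Fintype ι] [MeasurableSpace α]
    [NormedAddCommGroup E] [NormedSpace ℝ E] (ν : Measure α) [IsProbabilityMeasure ν]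
    {f : α → E} (hf : Integrable f ν) :
    ∫ ω : ι → α, ∑ i, f (ω i) ∂Measure.pi (fun _ => ν) = Fintype.card ι • ∫ a, f a ∂ν := by
  rw [integral_finsetSum _ fun i _ => integrable_comp_eval hf]
  simp_rw [integral_comp_eval (μ := fun _ => ν) hf.aestronglyMeasurable]
  rw [Finset.sum_const, Finset.card_univ]

/-- Unbiasedness of the M-dimensional random Fourier feature map: if the shift-invariant
kernel satisfies `K(x,x') = E_{w∼p}[cos(wᵀ(x-x'))]` and `(w_i, b_i)`, `i = 1,…,M`, are i.i.d.
with `w_i ∼ p` and `b_i ∼ U[0,2π]` independent, then `E[ψ(x)ᵀψ(x')] = K(x,x')`. -/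
theorem rff_map_unbiased {d M : ℕ} (hM : 0 < M)
    (p : Measure (Fin d → ℝ)) [IsProbabilityMeasure p]
    (K : (Fin d → ℝ) → (Fin d → ℝ) → ℝ)
    (hK : ∀ x x' : Fin d → ℝ,
      K x x' = ∫ w, Real.cos (∑ i, w i * (x i - x' i)) ∂p)
    (x x' : Fin d → ℝ) :
    ∫ ω : Fin M → ((Fin d → ℝ) × ℝ),
        (∑ i, rffMap ω x i * rffMap ω x' i)
        ∂(Measure.pi fun _ => p.prod uniform02pi)
      = K x x' := by
  simp_rw [rffMap_mul_rffMap]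
  rw [integral_sum_comp_eval_pi _ ((integrable_rffFeature_mul _ x x').const_mul _),
    integral_const_mul, integral_rffFeature_mul, ← hK, Fintype.card_fin, nsmul_eq_mul]
  field_simp
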